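/- arXiv:2401.11774 — 3 statements merged into one kernel-verified Lean document; each statement's English description precedes it below -/
import Mathlib

section
/- Assume R ≻ 0. Let X ∈ ℝ^{n×n} be symmetric with X ⪰ 0 and 𝓡(X) ⪰ 0, and let Z be a symmetric matrix satisfying [Z, −Iₙ] Ω(X) [Z; −Iₙ] = 0 such that A_c(X) − G_c(X) Z is stable. Then Z ⪰ X. -/
/-!
Write `Ric(Y) = A_cᵀ Y + Y A_c + H_c − Y G_c Y` with all coefficients frozen at `X`. Completing the
square gives `𝓡(X) = Ric(X)`, and the hypothesis on `Z` says `Ric(Z) = 0`. With `M = A_c − G_c Z`,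
subtracting the two yields the Lyapunov equation
`Mᵀ (Z − X) + (Z − X) M = −(𝓡(X) + (Z − X) G_c (Z − X))`,
whose right-hand side is `⪯ 0` because `R_c(X) ≻ 0`. For stable `M` this forces `Z − X ⪰ 0`: along
`w(t) = e^{tM} v` the quantity `w(t)ᵀ (Z − X) w(t)` is nonincreasing and tends to `0`. The decay of
`e^{tM}` follows from Gelfand's formula, since every eigenvalue of `e^M` is `e^λ` for an eigenvalue
`λ` of `M`.
-/

open Matrix Filter

noncomputable section

/-- `Π₁₁(X) = Σᵢ (A₀ⁱ)ᵀ X A₀ⁱ`. -/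
def Pi11 {n r : ℕ} (A0 : Fin r → Matrix (Fin n) (Fin n) ℝ)
    (X : Matrix (Fin n) (Fin n) ℝ) : Matrix (Fin n) (Fin n) ℝ :=
  ∑ i, (A0 i)ᵀ * X * A0 i

/-- `Π₁₂(X) = Σᵢ (A₀ⁱ)ᵀ X B₀ⁱ`. -/
def Pi12 {n m r : ℕ} (A0 : Fin r → Matrix (Fin n) (Fin n) ℝ)
    (B0 : Fin r → Matrix (Fin n) (Fin m) ℝ)
    (X : Matrix (Fin n) (Fin n) ℝ) : Matrix (Fin n) (Fin m) ℝ :=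
  ∑ i, (A0 i)ᵀ * X * B0 i

/-- `Π₂₂(X) = Σᵢ (B₀ⁱ)ᵀ X B₀ⁱ`. -/
def Pi22 {n m r : ℕ} (B0 : Fin r → Matrix (Fin n) (Fin m) ℝ)
    (X : Matrix (Fin n) (Fin n) ℝ) : Matrix (Fin m) (Fin m) ℝ :=
  ∑ i, (B0 i)ᵀ * X * B0 i

/-- The block matrix `Π(X) = [Π₁₁(X), Π₁₂(X); Π₁₂(X)ᵀ, Π₂₂(X)]`. -/
def PiBlock {n m r : ℕ} (A0 : Fin r → Matrix (Fin n) (Fin n) ℝ)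
    (B0 : Fin r → Matrix (Fin n) (Fin m) ℝ)
    (X : Matrix (Fin n) (Fin n) ℝ) : Matrix (Fin n ⊕ Fin m) (Fin n ⊕ Fin m) ℝ :=
  fromBlocks (Pi11 A0 X) (Pi12 A0 B0 X) (Pi12 A0 B0 X)ᵀ (Pi22 B0 X)

/-- `L_c(X) = L + Π₁₂(X)`. -/
def Lc {n m r : ℕ} (L : Matrix (Fin n) (Fin m) ℝ)
    (A0 : Fin r → Matrix (Fin n) (Fin n) ℝ) (B0 : Fin r → Matrix (Fin n) (Fin m) ℝ)
    (X : Matrix (Fin n) (Fin n) ℝ) : Matrix (Fin n) (Fin m) ℝ :=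
  L + Pi12 A0 B0 X

/-- `R_c(X) = R + Π₂₂(X)`. -/
def Rc {n m r : ℕ} (R : Matrix (Fin m) (Fin m) ℝ)
    (B0 : Fin r → Matrix (Fin n) (Fin m) ℝ)
    (X : Matrix (Fin n) (Fin n) ℝ) : Matrix (Fin m) (Fin m) ℝ :=
  R + Pi22 B0 X

/-- `Q_c(X) = Q + Π₁₁(X)`. -/
def Qc {n r : ℕ} (Q : Matrix (Fin n) (Fin n) ℝ)
    (A0 : Fin r → Matrix (Fin n) (Fin n) ℝ)
    (X : Matrix (Fin n) (Fin n) ℝ) : Matrix (Fin n) (Fin n) ℝ :=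
  Q + Pi11 A0 X

/-- `A_c(X) = A − B R_c(X)⁻¹ L_c(X)ᵀ`. -/
def Ac {n m r : ℕ} (A : Matrix (Fin n) (Fin n) ℝ) (B : Matrix (Fin n) (Fin m) ℝ)
    (L : Matrix (Fin n) (Fin m) ℝ) (R : Matrix (Fin m) (Fin m) ℝ)
    (A0 : Fin r → Matrix (Fin n) (Fin n) ℝ) (B0 : Fin r → Matrix (Fin n) (Fin m) ℝ)
    (X : Matrix (Fin n) (Fin n) ℝ) : Matrix (Fin n) (Fin n) ℝ :=
  A - B * (Rc R B0 X)⁻¹ * (Lc L A0 B0 X)ᵀ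

/-- `G_c(X) = B R_c(X)⁻¹ Bᵀ`. -/
def Gc {n m r : ℕ} (B : Matrix (Fin n) (Fin m) ℝ) (R : Matrix (Fin m) (Fin m) ℝ)
    (B0 : Fin r → Matrix (Fin n) (Fin m) ℝ)
    (X : Matrix (Fin n) (Fin n) ℝ) : Matrix (Fin n) (Fin n) ℝ :=
  B * (Rc R B0 X)⁻¹ * Bᵀ

/-- `H_c(X) = Q_c(X) − L_c(X) R_c(X)⁻¹ L_c(X)ᵀ`. -/
def Hc {n m r : ℕ} (Q : Matrix (Fin n) (Fin n) ℝ) (L : Matrix (Fin n) (Fin m) ℝ)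
    (R : Matrix (Fin m) (Fin m) ℝ)
    (A0 : Fin r → Matrix (Fin n) (Fin n) ℝ) (B0 : Fin r → Matrix (Fin n) (Fin m) ℝ)
    (X : Matrix (Fin n) (Fin n) ℝ) : Matrix (Fin n) (Fin n) ℝ :=
  Qc Q A0 X - Lc L A0 B0 X * (Rc R B0 X)⁻¹ * (Lc L A0 B0 X)ᵀ

/-- The SCARE residual
`𝓡(X) = AᵀX + XA + Q_c(X) − (XB + L_c(X)) R_c(X)⁻¹ (XB + L_c(X))ᵀ`. -/
def scareRes {n m r : ℕ} (A : Matrix (Fin n) (Fin n) ℝ) (B : Matrix (Fin n) (Fin m) ℝ)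
    (Q : Matrix (Fin n) (Fin n) ℝ) (L : Matrix (Fin n) (Fin m) ℝ)
    (R : Matrix (Fin m) (Fin m) ℝ)
    (A0 : Fin r → Matrix (Fin n) (Fin n) ℝ) (B0 : Fin r → Matrix (Fin n) (Fin m) ℝ)
    (X : Matrix (Fin n) (Fin n) ℝ) : Matrix (Fin n) (Fin n) ℝ :=
  Aᵀ * X + X * A + Qc Q A0 X -
    (X * B + Lc L A0 B0 X) * (Rc R B0 X)⁻¹ * (X * B + Lc L A0 B0 X)ᵀ

/-- `Ω(X) = [−G_c(X), −A_c(X); −A_c(X)ᵀ, H_c(X)]`. -/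
def Omega {n m r : ℕ} (A : Matrix (Fin n) (Fin n) ℝ) (B : Matrix (Fin n) (Fin m) ℝ)
    (Q : Matrix (Fin n) (Fin n) ℝ) (L : Matrix (Fin n) (Fin m) ℝ)
    (R : Matrix (Fin m) (Fin m) ℝ)
    (A0 : Fin r → Matrix (Fin n) (Fin n) ℝ) (B0 : Fin r → Matrix (Fin n) (Fin m) ℝ)
    (X : Matrix (Fin n) (Fin n) ℝ) : Matrix (Fin n ⊕ Fin n) (Fin n ⊕ Fin n) ℝ :=
  fromBlocks (-(Gc B R B0 X)) (-(Ac A B L R A0 B0 X)) (-(Ac A B L R A0 B0 X))ᵀ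
    (Hc Q L R A0 B0 X)

/-- The `2n×n` matrix `[X; −Iₙ]` stacking `X` over `−Iₙ`. -/
def stackNegI {n : ℕ} (X : Matrix (Fin n) (Fin n) ℝ) :
    Matrix (Fin n ⊕ Fin n) (Fin n) ℝ :=
  fromRows X (-1)

/-- The pair `(A, B)` is stabilizable: `yᴴ(A − λI) = 0`, `yᴴB = 0`, `Re λ ≥ 0` imply `y = 0`. -/
def Stabilizable {n m : ℕ} (A : Matrix (Fin n) (Fin n) ℝ)
    (B : Matrix (Fin n) (Fin m) ℝ) : Prop :=
  ∀ (lam : ℂ) (y : Fin n → ℂ), 0 ≤ lam.re →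
    vecMul (star y) (A.map Complex.ofReal - lam • 1) = 0 →
    vecMul (star y) (B.map Complex.ofReal) = 0 → y = 0

/-- The pair `(C, A)` is detectable: `(A − λI)z = 0`, `Cz = 0`, `Re λ ≥ 0` imply `z = 0`. -/
def Detectable {p n : ℕ} (C : Matrix (Fin p) (Fin n) ℝ)
    (A : Matrix (Fin n) (Fin n) ℝ) : Prop :=
  ∀ (lam : ℂ) (z : Fin n → ℂ), 0 ≤ lam.re →
    mulVec (A.map Complex.ofReal - lam • 1) z = 0 →
    mulVec (C.map Complex.ofReal) z = 0 → z = 0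

/-- A real square matrix is stable if all its (complex) eigenvalues have negative real part. -/
def IsStableMatrix {n : ℕ} (M : Matrix (Fin n) (Fin n) ℝ) : Prop :=
  ∀ μ ∈ spectrum ℂ (M.map Complex.ofReal), μ.re < 0

/-- Kernel condition: `(Q − LR⁻¹Lᵀ)z = 0` implies `Lᵀz = 0` and `A₀ⁱ z = 0` for all `i`. -/
def KernelCondition {n m r : ℕ} (Q : Matrix (Fin n) (Fin n) ℝ)
    (L : Matrix (Fin n) (Fin m) ℝ) (R : Matrix (Fin m) (Fin m) ℝ)
    (A0 : Fin r → Matrix (Fin n) (Fin n) ℝ) : Prop :=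
  ∀ z : Fin n → ℂ,
    mulVec ((Q - L * R⁻¹ * Lᵀ).map Complex.ofReal) z = 0 →
    mulVec (Lᵀ.map Complex.ofReal) z = 0 ∧
      ∀ i, mulVec ((A0 i).map Complex.ofReal) z = 0

/-- `Γ(X) = [[0, −A, −B], [−Aᵀ, Q_c(X), L_c(X)], [−Bᵀ, L_c(X)ᵀ, R_c(X)]]`. -/
def Gamma {n m r : ℕ} (A : Matrix (Fin n) (Fin n) ℝ) (B : Matrix (Fin n) (Fin m) ℝ)
    (Q : Matrix (Fin n) (Fin n) ℝ) (L : Matrix (Fin n) (Fin m) ℝ)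
    (R : Matrix (Fin m) (Fin m) ℝ)
    (A0 : Fin r → Matrix (Fin n) (Fin n) ℝ) (B0 : Fin r → Matrix (Fin n) (Fin m) ℝ)
    (X : Matrix (Fin n) (Fin n) ℝ) :
    Matrix ((Fin n ⊕ Fin n) ⊕ Fin m) ((Fin n ⊕ Fin n) ⊕ Fin m) ℝ :=
  fromBlocks (fromBlocks 0 (-A) (-Aᵀ) (Qc Q A0 X))
    (fromRows (-B) (Lc L A0 B0 X))
    (fromRows (-B) (Lc L A0 B0 X))ᵀ
    (Rc R B0 X)

/-- `F_W(Y) = [Y; −Iₙ]ᵀ (Ω(Y) − Ω(W)) [Y; −Iₙ]`. -/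
def FW {n m r : ℕ} (A : Matrix (Fin n) (Fin n) ℝ) (B : Matrix (Fin n) (Fin m) ℝ)
    (Q : Matrix (Fin n) (Fin n) ℝ) (L : Matrix (Fin n) (Fin m) ℝ)
    (R : Matrix (Fin m) (Fin m) ℝ)
    (A0 : Fin r → Matrix (Fin n) (Fin n) ℝ) (B0 : Fin r → Matrix (Fin n) (Fin m) ℝ)
    (W Y : Matrix (Fin n) (Fin n) ℝ) : Matrix (Fin n) (Fin n) ℝ :=
  (stackNegI Y)ᵀ * (Omega A B Q L R A0 B0 Y - Omega A B Q L R A0 B0 W) * stackNegI Y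

/-- `𝓕_W(Z) = Kᵀ Π(Z) K` with `K = [−Iₙ; R_c(W)⁻¹ (L_c(W) + W B)ᵀ]`. -/
def Fcal {n m r : ℕ} (B : Matrix (Fin n) (Fin m) ℝ)
    (L : Matrix (Fin n) (Fin m) ℝ) (R : Matrix (Fin m) (Fin m) ℝ)
    (A0 : Fin r → Matrix (Fin n) (Fin n) ℝ) (B0 : Fin r → Matrix (Fin n) (Fin m) ℝ)
    (W Z : Matrix (Fin n) (Fin n) ℝ) : Matrix (Fin n) (Fin n) ℝ :=
  (fromRows (-1 : Matrix (Fin n) (Fin n) ℝ)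
      ((Rc R B0 W)⁻¹ * (Lc L A0 B0 W + W * B)ᵀ))ᵀ *
    PiBlock A0 B0 Z *
    fromRows (-1 : Matrix (Fin n) (Fin n) ℝ)
      ((Rc R B0 W)⁻¹ * (Lc L A0 B0 W + W * B)ᵀ)

open NormedSpace Topology

theorem tendsto_pow_atTop_nhds_zero_of_spectralRadius_lt_one {A : Type*} [NormedRing A]
    [NormedAlgebra ℂ A] [CompleteSpace A] {a : A} (ha : spectralRadius ℂ a < 1) :
    Tendsto (a ^ ·) atTop (𝓝 0) := by
  obtain ⟨r, har, hr⟩ := ENNReal.lt_iff_exists_nnreal_btwn.mp ha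
  have hbound : ∀ᶠ k : ℕ in atTop, ‖a ^ k‖ ≤ (r : ℝ) ^ k := by
    filter_upwards [(spectrum.pow_nnnorm_pow_one_div_tendsto_nhds_spectralRadius a
      ).eventually_lt_const har, eventually_ge_atTop 1] with k hk hk1
    have hk0 : (k : ℝ) ≠ 0 := by positivity
    have := ENNReal.rpow_lt_rpow hk (by positivity : (0 : ℝ) < k)
    rw [← ENNReal.rpow_mul, one_div, inv_mul_cancel₀ hk0, ENNReal.rpow_one, ENNReal.rpow_natCast,
      ← ENNReal.coe_pow, ENNReal.coe_lt_coe] at this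
    exact_mod_cast this.le
  refine tendsto_zero_iff_norm_tendsto_zero.mpr <|
    squeeze_zero' (.of_forall fun _ => norm_nonneg _) hbound ?_
  exact tendsto_pow_atTop_nhds_zero_of_lt_one r.coe_nonneg (mod_cast hr)

section MatrixExponential

attribute [local instance] Matrix.linftyOpNormedAddCommGroup Matrix.linftyOpNormedSpace
  Matrix.linftyOpNormedRing Matrix.linftyOpNormedAlgebra

variable {ι : Type*} [Fintype ι]

section Derivatives

variable {κ 𝕜 : Type*} [NontriviallyNormedField 𝕜] {t : 𝕜}

theorem HasDerivAt.dotProduct {f g : 𝕜 → ι → 𝕜} {f' g' : ι → 𝕜}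
    (hf : HasDerivAt f f' t) (hg : HasDerivAt g g' t) :
    HasDerivAt (fun s => f s ⬝ᵥ g s) (f' ⬝ᵥ g t + f t ⬝ᵥ g') t :=
  (HasDerivAt.fun_sum (u := Finset.univ) fun i _ =>
    (hasDerivAt_pi.1 hf i).mul (hasDerivAt_pi.1 hg i)).congr_deriv Finset.sum_add_distrib

variable [CompleteSpace 𝕜]

theorem HasDerivAt.const_mulVec [Fintype κ] (D : Matrix κ ι 𝕜) {f : 𝕜 → ι → 𝕜} {f' : ι → 𝕜}
    (hf : HasDerivAt f f' t) : HasDerivAt (fun s => D *ᵥ f s) (D *ᵥ f') t :=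
  D.mulVecLin.toContinuousLinearMap.hasFDerivAt.comp_hasDerivAt t hf

theorem HasDerivAt.mulVec_const [Fintype κ] {F : 𝕜 → Matrix κ ι 𝕜} {F' : Matrix κ ι 𝕜}
    (hF : HasDerivAt F F' t) (v : ι → 𝕜) : HasDerivAt (fun s => F s *ᵥ v) (F' *ᵥ v) t :=
  (LinearMap.toContinuousLinearMap ((mulVecBilin 𝕜 𝕜).flip v : Matrix κ ι 𝕜 →ₗ[𝕜] κ → 𝕜)
    ).hasFDerivAt.comp_hasDerivAt t hF

end Derivatives

variable [DecidableEq ι]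

theorem Matrix.exp_mulVec_of_mulVec_eq_smul {M : Matrix ι ι ℂ} {w : ι → ℂ} {μ : ℂ}
    (h : M *ᵥ w = μ • w) : exp M *ᵥ w = Complex.exp μ • w := by
  have hpow (k : ℕ) : M ^ k *ᵥ w = μ ^ k • w := by
    induction k with
    | zero => simp
    | succ k ih => rw [pow_succ, ← mulVec_mulVec, h, mulVec_smul, ih, smul_smul, pow_succ']
  have hseries := (exp_series_hasSum_exp' (𝕂 := ℂ) M).map (mulVec.addMonoidHomLeft w)
    (continuous_id.matrix_mulVec continuous_const)
  refine hseries.unique ?_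
  simp only [Function.comp_def, mulVec.addMonoidHomLeft, AddMonoidHom.coe_mk, ZeroHom.coe_mk,
    smul_mulVec, hpow, smul_smul]
  rw [Complex.exp_eq_exp_ℂ]
  exact (exp_series_hasSum_exp' (𝕂 := ℂ) μ).smul_const w

theorem Matrix.spectrum_exp_subset (M : Matrix ι ι ℂ) :
    spectrum ℂ (exp M) ⊆ Complex.exp '' spectrum ℂ M := by
  intro μ hμ
  -- `M` preserves the `μ`-eigenspace of `exp M`, so it has an eigenvector `w` there, and then
  -- `μ • w = exp M *ᵥ w = exp lam • w`.
  rw [← spectrum_toLin', ← Module.End.hasEigenvalue_iff_mem_spectrum] at hμ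
  have hcomm : Commute (toLin' (exp M)) (toLin' M) :=
    (Commute.refl M).exp_left.map toLinAlgEquiv'
  let E := Module.End.eigenspace (toLin' (exp M)) μ
  have : Nontrivial E := Submodule.nontrivial_iff_ne_bot.mpr hμ
  obtain ⟨lam, hlam⟩ := Module.End.exists_eigenvalue
    ((toLin' M).restrict (Module.End.mapsTo_genEigenspace_of_comm hcomm μ 1) : Module.End ℂ E)
  obtain ⟨⟨w, hwE⟩, hw⟩ := hlam.exists_hasEigenvector
  have hMw : M *ᵥ w = lam • w := congrArg Subtype.val hw.apply_eq_smul
  have hw0 : w ≠ 0 := by simpa using hw.2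
  refine ⟨lam, ?_, smul_left_injective ℂ hw0 ?_⟩
  · rw [← spectrum_toLin', ← Module.End.hasEigenvalue_iff_mem_spectrum]
    exact Module.End.hasEigenvalue_of_hasEigenvector
      ⟨Module.End.mem_eigenspace_iff.mpr (by simpa using hMw), hw0⟩
  · simpa [← exp_mulVec_of_mulVec_eq_smul hMw] using (Module.End.mem_eigenspace_iff.mp hwE)

theorem Matrix.tendsto_exp_pow_of_forall_re_neg {M : Matrix ι ι ℂ}
    (hM : ∀ μ ∈ spectrum ℂ M, μ.re < 0) : Tendsto (exp M ^ ·) atTop (𝓝 0) := by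
  refine tendsto_pow_atTop_nhds_zero_of_spectralRadius_lt_one ?_
  rcases (spectrum ℂ (exp M)).eq_empty_or_nonempty with h | h
  · simp [spectralRadius, h]
  refine mod_cast spectrum.spectralRadius_lt_of_forall_lt_of_nonempty h fun z hz => ?_
  obtain ⟨μ, hμ, rfl⟩ := spectrum_exp_subset M hz
  rw [← NNReal.coe_lt_coe, coe_nnnorm, Complex.norm_exp]
  exact Real.exp_lt_one_iff.mpr (hM μ hμ)

theorem IsStableMatrix.tendsto_exp_pow {n : ℕ} {M : Matrix (Fin n) (Fin n) ℝ}
    (hM : IsStableMatrix M) : Tendsto (exp M ^ ·) atTop (𝓝 0) := by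
  let φ : Matrix (Fin n) (Fin n) ℝ →+* Matrix (Fin n) (Fin n) ℂ := Complex.ofRealHom.mapMatrix
  have hmap (k : ℕ) : (exp M ^ k).map Complex.ofReal = exp (M.map Complex.ofReal) ^ k := by
    have hexp : φ (exp M) = exp (φ M) :=
      map_exp φ (continuous_id.matrix_map Complex.continuous_ofReal) M
    exact (map_pow φ _ k).trans (congrArg (· ^ k) hexp)
  have hre : Continuous fun P : Matrix (Fin n) (Fin n) ℂ => P.map Complex.re :=
    continuous_id.matrix_map Complex.continuous_re
  convert (hre.tendsto' 0 0 (by simp)).comp (tendsto_exp_pow_of_forall_re_neg hM) using 1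
  funext k
  simp [← hmap, Function.comp_def]

theorem IsStableMatrix.posSemidef_of_lyapunov {n : ℕ} {M S D : Matrix (Fin n) (Fin n) ℝ}
    (hM : IsStableMatrix M) (hS : S.PosSemidef) (hD : D.IsHermitian)
    (hMSD : Mᵀ * D + D * M = -S) : D.PosSemidef := by
  refine PosSemidef.of_dotProduct_mulVec_nonneg hD fun v => ?_
  set w : ℝ → Fin n → ℝ := fun t => exp (t • M) *ᵥ v
  set g : ℝ → ℝ := fun t => w t ⬝ᵥ D *ᵥ w t
  have hw (t : ℝ) : HasDerivAt w (M *ᵥ w t) t :=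
    ((hasDerivAt_exp_smul_const' M t).mulVec_const v).congr_deriv (mulVec_mulVec _ _ _).symm
  have hg (t : ℝ) : HasDerivAt g (-(w t ⬝ᵥ S *ᵥ w t)) t := by
    refine ((hw t).dotProduct ((hw t).const_mulVec D)).congr_deriv ?_
    rw [← dotProduct_neg, ← neg_mulVec, ← hMSD, add_mulVec, dotProduct_add, ← mulVec_mulVec,
      ← mulVec_mulVec, dotProduct_mulVec (w t) Mᵀ, vecMul_transpose]
  have hanti : Antitone g := antitone_of_hasDerivAt_nonpos hg fun t =>
    neg_nonpos.mpr (by simpa using hS.dotProduct_mulVec_nonneg (w t))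
  have hlim : Tendsto (fun k : ℕ => g k) atTop (𝓝 0) := by
    have hwk : (fun k : ℕ => w k) = fun k => exp M ^ k *ᵥ v := by
      funext k
      show exp ((k : ℝ) • M) *ᵥ v = _
      rw [Nat.cast_smul_eq_nsmul, Matrix.exp_nsmul]
    have hw0 : Tendsto (fun k : ℕ => w k) atTop (𝓝 0) := by
      rw [hwk]
      exact ((continuous_id.matrix_mulVec continuous_const).tendsto' 0 0 (zero_mulVec v)).comp
        hM.tendsto_exp_pow
    have hq : Continuous fun x : Fin n → ℝ => x ⬝ᵥ D *ᵥ x :=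
      continuous_id.dotProduct (continuous_const.matrix_mulVec continuous_id)
    exact (hq.tendsto' 0 0 (by simp)).comp hw0
  simpa [g, w] using le_of_tendsto hlim (.of_forall fun k => hanti k.cast_nonneg)

end MatrixExponential

section Riccati

variable {n m r : ℕ}

def riccatiMap (A G H Y : Matrix (Fin n) (Fin n) ℝ) : Matrix (Fin n) (Fin n) ℝ :=
  Aᵀ * Y + Y * A + H - Y * G * Y

theorem riccatiMap_sub_riccatiMap {A G H X Z : Matrix (Fin n) (Fin n) ℝ} (hG : Gᵀ = G)
    (hZ : Zᵀ = Z) :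
    (A - G * Z)ᵀ * (Z - X) + (Z - X) * (A - G * Z)
      = -(riccatiMap A G H X - riccatiMap A G H Z + (Z - X) * G * (Z - X)) := by
  simp only [riccatiMap, transpose_sub, transpose_mul, hG, hZ, Matrix.sub_mul, Matrix.mul_sub,
    Matrix.mul_assoc]
  abel

theorem transpose_stackNegI_mul_Omega_mul {A Q : Matrix (Fin n) (Fin n) ℝ}
    {B L : Matrix (Fin n) (Fin m) ℝ} {R : Matrix (Fin m) (Fin m) ℝ}
    {A0 : Fin r → Matrix (Fin n) (Fin n) ℝ} {B0 : Fin r → Matrix (Fin n) (Fin m) ℝ}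
    {W Z : Matrix (Fin n) (Fin n) ℝ} (hZ : Zᵀ = Z) :
    (stackNegI Z)ᵀ * Omega A B Q L R A0 B0 W * stackNegI Z
      = riccatiMap (Ac A B L R A0 B0 W) (Gc B R B0 W) (Hc Q L R A0 B0 W) Z := by
  rw [stackNegI, Omega, transpose_fromRows, Matrix.mul_assoc, fromBlocks_mul_fromRows,
    fromCols_mul_fromRows, hZ, riccatiMap]
  simp only [transpose_neg, transpose_one, Matrix.neg_mul, Matrix.mul_neg, Matrix.mul_one,
    Matrix.one_mul, neg_neg, Matrix.mul_add, Matrix.mul_assoc]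
  abel

theorem scareRes_eq_riccatiMap {A Q : Matrix (Fin n) (Fin n) ℝ}
    {B L : Matrix (Fin n) (Fin m) ℝ} {R : Matrix (Fin m) (Fin m) ℝ}
    {A0 : Fin r → Matrix (Fin n) (Fin n) ℝ} {B0 : Fin r → Matrix (Fin n) (Fin m) ℝ}
    {X : Matrix (Fin n) (Fin n) ℝ} (hX : Xᵀ = X) (hRc : (Rc R B0 X)ᵀ = Rc R B0 X) :
    scareRes A B Q L R A0 B0 X
      = riccatiMap (Ac A B L R A0 B0 X) (Gc B R B0 X) (Hc Q L R A0 B0 X) X := by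
  have hRcinv : ((Rc R B0 X)⁻¹)ᵀ = (Rc R B0 X)⁻¹ := by rw [transpose_nonsing_inv, hRc]
  simp only [scareRes, riccatiMap, Ac, Gc, Hc, transpose_sub, transpose_add, transpose_mul,
    transpose_transpose, hRcinv, hX, Matrix.add_mul, Matrix.mul_add, Matrix.sub_mul,
    Matrix.mul_sub, Matrix.mul_assoc]
  abel

theorem Pi22_posSemidef (B0 : Fin r → Matrix (Fin n) (Fin m) ℝ) {X : Matrix (Fin n) (Fin n) ℝ}
    (hX : X.PosSemidef) : (Pi22 B0 X).PosSemidef :=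
  posSemidef_sum _ fun i _ => by
    simpa [conjTranspose_eq_transpose_of_trivial] using hX.conjTranspose_mul_mul_same (B0 i)

theorem Rc_posDef {R : Matrix (Fin m) (Fin m) ℝ} (hR : R.PosDef)
    (B0 : Fin r → Matrix (Fin n) (Fin m) ℝ) {X : Matrix (Fin n) (Fin n) ℝ}
    (hX : X.PosSemidef) : (Rc R B0 X).PosDef :=
  hR.add_posSemidef (Pi22_posSemidef B0 hX)

theorem Gc_posSemidef (B : Matrix (Fin n) (Fin m) ℝ) {R : Matrix (Fin m) (Fin m) ℝ}
    {B0 : Fin r → Matrix (Fin n) (Fin m) ℝ} {X : Matrix (Fin n) (Fin n) ℝ}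
    (hRc : (Rc R B0 X).PosDef) : (Gc B R B0 X).PosSemidef := by
  simpa [Gc, conjTranspose_eq_transpose_of_trivial] using
    hRc.inv.posSemidef.mul_mul_conjTranspose_same B

end Riccati

theorem stmt11_general (n m r : ℕ)
    (A Q : Matrix (Fin n) (Fin n) ℝ) (B L : Matrix (Fin n) (Fin m) ℝ)
    (R : Matrix (Fin m) (Fin m) ℝ)
    (A0 : Fin r → Matrix (Fin n) (Fin n) ℝ) (B0 : Fin r → Matrix (Fin n) (Fin m) ℝ)
    (hRpd : R.PosDef)
    (X Z : Matrix (Fin n) (Fin n) ℝ)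
    (hX : X.IsHermitian) (hZ : Z.IsHermitian)
    (hXpsd : X.PosSemidef) (hres : (scareRes A B Q L R A0 B0 X).PosSemidef)
    (hfroz : (stackNegI Z)ᵀ * Omega A B Q L R A0 B0 X * stackNegI Z = 0)
    (hstable : IsStableMatrix (Ac A B L R A0 B0 X - Gc B R B0 X * Z)) :
    (Z - X).PosSemidef := by
  have hXT : Xᵀ = X := (isHermitian_iff_isSymm.mp hX).eq
  have hZT : Zᵀ = Z := (isHermitian_iff_isSymm.mp hZ).eq
  have hRc := Rc_posDef hRpd B0 hXpsd
  have hG := Gc_posSemidef B hRc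
  have hZric : riccatiMap (Ac A B L R A0 B0 X) (Gc B R B0 X) (Hc Q L R A0 B0 X) Z = 0 := by
    rwa [← transpose_stackNegI_mul_Omega_mul hZT]
  have hGZX : ((Z - X) * Gc B R B0 X * (Z - X)).PosSemidef := by
    simpa [hXT, hZT] using hG.mul_mul_conjTranspose_same (Z - X)
  refine hstable.posSemidef_of_lyapunov (hres.add hGZX) (hZ.sub hX) ?_
  rw [riccatiMap_sub_riccatiMap (isHermitian_iff_isSymm.mp hG.isHermitian).eq hZT, hZric,
    sub_zero, scareRes_eq_riccatiMap hXT (isHermitian_iff_isSymm.mp hRc.isHermitian).eq]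

/-- If R ≻ 0, X ⪰ 0 with 𝓡(X) ⪰ 0, and Z is a stabilizing solution of the CARE
frozen at X, then Z ⪰ X. -/
theorem stmt11 (n m r : ℕ) (hn : 0 < n) (hm : 0 < m) (hr : 0 < r)
    (A Q : Matrix (Fin n) (Fin n) ℝ) (B L : Matrix (Fin n) (Fin m) ℝ)
    (R : Matrix (Fin m) (Fin m) ℝ)
    (A0 : Fin r → Matrix (Fin n) (Fin n) ℝ) (B0 : Fin r → Matrix (Fin n) (Fin m) ℝ)
    (hQ : Q.IsHermitian) (hRsymm : R.IsHermitian)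
    (hRpd : R.PosDef)
    (X Z : Matrix (Fin n) (Fin n) ℝ)
    (hX : X.IsHermitian) (hZ : Z.IsHermitian)
    (hXpsd : X.PosSemidef) (hres : (scareRes A B Q L R A0 B0 X).PosSemidef)
    (hfroz : (stackNegI Z)ᵀ * Omega A B Q L R A0 B0 X * stackNegI Z = 0)
    (hstable : IsStableMatrix (Ac A B L R A0 B0 X - Gc B R B0 X * Z)) :
    (Z - X).PosSemidef :=
  stmt11_general n m r A Q B L R A0 B0 hRpd X Z hX hZ hXpsd hres hfroz hstable
end
end

section
/- Assume R ≻ 0. Let X, X_* ∈ ℝ^{n×n} be symmetric with 0 ⪯ X ⪯ X_* and 𝓡(X_*) = 0, and suppose A_c(X) − G_c(X) X_* is stable. If Z is a symmetric matrix satisfying [Z, −Iₙ] Ω(X) [Z; −Iₙ] = 0, then Z ⪯ X_*. -/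
open Matrix Filter

noncomputable section

/-!
Put `Δ = X_* - Z` and `M = A_c(X) - G_c(X) X_*`. Subtracting the Riccati equation frozen at `X`,
which `Z` solves, from the same equation evaluated at `X_*` gives `MᵀΔ + ΔM + Δ G_c(X) Δ`.
Completing the square against the gain `K` of `X_*` and using `𝓡(X_*) = 0`, the frozen residual
at `X_*` is `-Σᵢ (A₀ⁱ - B₀ⁱK)ᵀ(X_* - X)(A₀ⁱ - B₀ⁱK) - (K - K_X)ᵀ R_c(X) (K - K_X) ⪯ 0`.
Hence `MᵀΔ + ΔM = -W` with `W ⪰ 0` and `M` stable, and such a Lyapunov equation forces `Δ ⪰ 0`.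
For the last step the Cayley transform `S = (I + M)(I - M)⁻¹` turns it into `Δ - SᵀΔS ⪰ 0`;
the spectrum of `S` lies in the open unit disc, so `Sᵏ → 0` by Gelfand's formula and
`vᵀΔv ≥ (Sᵏv)ᵀΔ(Sᵏv) → 0`.
-/

open Topology

theorem tendsto_pow_atTop_nhds_zero_of_forall_norm_lt_one {A : Type*} [NormedRing A]
    [NormedAlgebra ℂ A] [CompleteSpace A] {a : A} (ha : ∀ z ∈ spectrum ℂ a, ‖z‖ < 1) :
    Tendsto (a ^ ·) atTop (𝓝 0) := by
  nontriviality A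
  have hρ : spectralRadius ℂ a < 1 := by
    simpa using spectrum.spectralRadius_lt_of_forall_lt a (r := 1) fun z hz => by
      simpa [← NNReal.coe_lt_coe] using ha z hz
  obtain ⟨c, hρc, hc1⟩ := ENNReal.lt_iff_exists_nnreal_btwn.mp hρ
  have hbound : ∀ᶠ k : ℕ in atTop, ‖a ^ k‖ ≤ c ^ k := by
    filter_upwards [(spectrum.pow_nnnorm_pow_one_div_tendsto_nhds_spectralRadius a).eventually
      (gt_mem_nhds hρc), eventually_gt_atTop 0] with k hk hk0
    rw [one_div, ENNReal.rpow_inv_lt_iff (by positivity), ENNReal.rpow_natCast] at hk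
    exact_mod_cast hk.le
  exact squeeze_zero_norm' hbound
    (tendsto_pow_atTop_nhds_zero_of_lt_one c.2 (by exact_mod_cast hc1))

theorem norm_lt_one_of_mem_spectrum_cayley {A : Type*} [Ring A] [Algebra ℂ A] {a t : A}
    (ha : ∀ μ ∈ spectrum ℂ a, μ.re < 0) (ht : t * (1 - a) = 1) (ht' : (1 - a) * t = 1)
    {z : ℂ} (hz : z ∈ spectrum ℂ ((1 + a) * t)) : ‖z‖ < 1 := by
  by_contra! hz1
  have hfactor : algebraMap ℂ A z - (1 + a) * t
      = (algebraMap ℂ A (z - 1) - (z + 1) • a) * t := by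
    calc algebraMap ℂ A z - (1 + a) * t = (algebraMap ℂ A z * (1 - a) - (1 + a)) * t := by
          rw [sub_mul, mul_assoc, ht', mul_one]
      _ = _ := by
          simp only [map_sub, map_one, Algebra.smul_def, map_add]
          noncomm_ring
  rw [spectrum.mem_iff, hfactor] at hz
  refine hz (IsUnit.mul ?_ ⟨⟨t, 1 - a, ht, ht'⟩, rfl⟩)
  by_cases hz' : z + 1 = 0
  · rw [hz', zero_smul, sub_zero]
    exact (isUnit_iff_ne_zero.mpr fun h => by simp_all [sub_eq_zero]).map _
  · set μ := (z - 1) / (z + 1)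
    -- `Re ((z - 1) / (z + 1)) = (‖z‖² - 1) / ‖z + 1‖²`
    have hμ : μ ∉ spectrum ℂ a := fun hμ => by
      have hre : 0 ≤ μ.re := by
        rw [Complex.div_re, ← add_div]
        refine div_nonneg ?_ (Complex.normSq_nonneg _)
        have hnorm := Complex.normSq_eq_norm_sq z
        simp only [Complex.sub_re, Complex.add_re, Complex.one_re, Complex.sub_im,
          Complex.add_im, Complex.one_im, Complex.normSq_apply] at hnorm ⊢
        nlinarith
      exact (ha μ hμ).not_ge hre
    rw [spectrum.notMem_iff] at hμ
    have hscale : algebraMap ℂ A (z - 1) - (z + 1) • a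
        = algebraMap ℂ A (z + 1) * (algebraMap ℂ A μ - a) := by
      rw [mul_sub, ← map_mul, mul_div_cancel₀ _ hz', Algebra.smul_def]
    rw [hscale]
    exact (isUnit_iff_ne_zero.mpr hz').map _ |>.mul hμ

theorem tendsto_of_tendsto_map_ofReal {ι κ : Type*} {u : ℕ → Matrix ι κ ℝ}
    (hu : Tendsto (fun k => (u k).map Complex.ofReal) atTop (𝓝 0)) : Tendsto u atTop (𝓝 0) := by
  have hre : Continuous fun N : Matrix ι κ ℂ => N.map Complex.re :=
    continuous_id.matrix_map Complex.continuous_re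
  simpa [Function.comp_def] using (hre.tendsto 0).comp hu

theorem Matrix.PosSemidef.transpose_mul_mul_same {ι κ : Type*} [Fintype ι] [Fintype κ]
    {M : Matrix ι ι ℝ} (hM : M.PosSemidef) (C : Matrix ι κ ℝ) : (Cᵀ * M * C).PosSemidef := by
  simpa using hM.conjTranspose_mul_mul_same C

section Lyapunov

variable {ι : Type*} [Fintype ι] [DecidableEq ι]

theorem posSemidef_of_tendsto_pow_of_posSemidef_sub {S Δ : Matrix ι ι ℝ} (hΔ : Δ.IsHermitian)
    (hS : Tendsto (S ^ ·) atTop (𝓝 0)) (hStein : (Δ - Sᵀ * Δ * S).PosSemidef) :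
    Δ.PosSemidef := by
  refine .of_dotProduct_mulVec_nonneg hΔ fun v => ?_
  let q : (ι → ℝ) → ℝ := fun w => w ⬝ᵥ Δ *ᵥ w
  have hstep : ∀ w, q (S *ᵥ w) ≤ q w := fun w => by
    have hSw : q (S *ᵥ w) = w ⬝ᵥ (Sᵀ * Δ * S) *ᵥ w := by
      rw [← mulVec_mulVec, ← mulVec_mulVec, dotProduct_mulVec, vecMul_transpose]
    simpa [hSw, sub_mulVec, q] using hStein.dotProduct_mulVec_nonneg w
  have hmono : ∀ k : ℕ, q ((S ^ k) *ᵥ v) ≤ q v := fun k => by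
    induction k with
    | zero => simp
    | succ k ih => exact (pow_succ' S k ▸ mulVec_mulVec v S (S ^ k) ▸ hstep _).trans ih
  have hlim : Tendsto (fun k : ℕ => q ((S ^ k) *ᵥ v)) atTop (𝓝 0) := by
    have hq : Continuous fun N : Matrix ι ι ℝ => q (N *ᵥ v) := by fun_prop
    convert (hq.tendsto 0).comp hS <;> simp [q]
  simpa using le_of_tendsto' hlim hmono

theorem sub_transpose_cayley_mul_mul_cayley {M T Δ W : Matrix ι ι ℝ} (hT : T * (1 - M) = 1)
    (h : Mᵀ * Δ + Δ * M = -W) :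
    Δ - ((1 + M) * T)ᵀ * Δ * ((1 + M) * T) = Tᵀ * (2 • W) * T := by
  have hT' : (1 - M) * T = 1 := mul_eq_one_comm.mp hT
  calc Δ - ((1 + M) * T)ᵀ * Δ * ((1 + M) * T)
      = ((1 - M) * T)ᵀ * Δ * ((1 - M) * T) - ((1 + M) * T)ᵀ * Δ * ((1 + M) * T) := by
        rw [hT', transpose_one, one_mul, mul_one]
    _ = Tᵀ * (-(Mᵀ * Δ + Δ * M) - (Mᵀ * Δ + Δ * M)) * T := by
        simp only [transpose_mul, transpose_sub, transpose_add, transpose_one]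
        noncomm_ring
    _ = Tᵀ * (2 • W) * T := by rw [h, neg_neg, sub_neg_eq_add, two_smul]

end Lyapunov

theorem IsStableMatrix.isUnit_one_sub {n : ℕ} {M : Matrix (Fin n) (Fin n) ℝ}
    (hM : IsStableMatrix M) : IsUnit (1 - M) := by
  have h1 : (1 : ℂ) ∉ spectrum ℂ (M.map Complex.ofReal) := fun h =>
    absurd (hM 1 h) (by norm_num)
  rw [spectrum.notMem_iff, map_one] at h1
  have h2 : IsUnit (Complex.ofRealHom.mapMatrix (1 - M)).det := by
    rw [map_sub, map_one, ← isUnit_iff_isUnit_det]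
    exact h1
  rw [← RingHom.map_det, isUnit_iff_ne_zero, Complex.ofRealHom_eq_coe,
    Complex.ofReal_ne_zero] at h2
  rw [isUnit_iff_isUnit_det, isUnit_iff_ne_zero]
  exact h2

attribute [local instance] Matrix.linftyOpNormedRing Matrix.linftyOpNormedAlgebra in
theorem IsStableMatrix.tendsto_pow_cayley {n : ℕ} {M T : Matrix (Fin n) (Fin n) ℝ}
    (hM : IsStableMatrix M) (hT : T * (1 - M) = 1) :
    Tendsto (((1 + M) * T) ^ ·) atTop (𝓝 0) := by
  let f : Matrix (Fin n) (Fin n) ℝ →+* Matrix (Fin n) (Fin n) ℂ := Complex.ofRealHom.mapMatrix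
  have hfT : f T * (1 - f M) = 1 := by rw [← map_one f, ← map_sub, ← map_mul, hT]
  have hdecay := tendsto_pow_atTop_nhds_zero_of_forall_norm_lt_one fun z hz =>
    norm_lt_one_of_mem_spectrum_cayley hM hfT (mul_eq_one_comm.mp hfT) hz
  refine tendsto_of_tendsto_map_ofReal (hdecay.congr fun k => ?_)
  change ((1 + f M) * f T) ^ k = f (((1 + M) * T) ^ k)
  simp only [map_pow, map_mul, map_add, map_one]

theorem IsStableMatrix.posSemidef_of_lyapunov_s12 {n : ℕ} {M Δ W : Matrix (Fin n) (Fin n) ℝ}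
    (hM : IsStableMatrix M) (hΔ : Δ.IsHermitian) (hW : W.PosSemidef)
    (h : Mᵀ * Δ + Δ * M = -W) : Δ.PosSemidef := by
  have hT : (1 - M)⁻¹ * (1 - M) = 1 :=
    nonsing_inv_mul _ ((isUnit_iff_isUnit_det _).mp hM.isUnit_one_sub)
  refine posSemidef_of_tendsto_pow_of_posSemidef_sub hΔ (hM.tendsto_pow_cayley hT) ?_
  rw [sub_transpose_cayley_mul_mul_cayley hT h]
  exact (hW.smul zero_le_two).transpose_mul_mul_same _
section Riccati

variable {ι κ : Type*} [Fintype ι] [Fintype κ] [DecidableEq κ]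

-- `𝓡(Y)` is `careRes A B (Q_c Y) (L_c Y) (R_c Y) Y`, and the Riccati equation frozen at `X` reads
-- `careRes A B (Q_c X) (L_c X) (R_c X) Z = 0`.
def careRes (A : Matrix ι ι ℝ) (B : Matrix ι κ ℝ) (Q : Matrix ι ι ℝ) (L : Matrix ι κ ℝ)
    (R : Matrix κ κ ℝ) (Y : Matrix ι ι ℝ) : Matrix ι ι ℝ :=
  Aᵀ * Y + Y * A + Q - (Y * B + L) * R⁻¹ * (Y * B + L)ᵀ

-- `[I; -K]ᵀ [AᵀY + YA + Q, YB + L; (YB + L)ᵀ, R] [I; -K]`, which is affine in `(Q, L, R)`.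
def closedLoopRes (A : Matrix ι ι ℝ) (B : Matrix ι κ ℝ) (Q : Matrix ι ι ℝ) (L : Matrix ι κ ℝ)
    (R : Matrix κ κ ℝ) (K : Matrix κ ι ℝ) (Y : Matrix ι ι ℝ) : Matrix ι ι ℝ :=
  Aᵀ * Y + Y * A + Q - (Y * B + L) * K - Kᵀ * (Y * B + L)ᵀ + Kᵀ * R * K

def riccatiGain (B : Matrix ι κ ℝ) (L : Matrix ι κ ℝ) (R : Matrix κ κ ℝ) (Y : Matrix ι ι ℝ) :
    Matrix κ ι ℝ :=
  R⁻¹ * (Y * B + L)ᵀ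

variable (A : Matrix ι ι ℝ) (B : Matrix ι κ ℝ) (Q : Matrix ι ι ℝ) (L : Matrix ι κ ℝ)
  {R : Matrix κ κ ℝ}

theorem careRes_eq_closedLoopRes_sub (hR : R.IsSymm) (hRdet : IsUnit R.det) (K : Matrix κ ι ℝ)
    (Y : Matrix ι ι ℝ) :
    careRes A B Q L R Y = closedLoopRes A B Q L R K Y
      - (K - riccatiGain B L R Y)ᵀ * R * (K - riccatiGain B L R Y) := by
  have hRinv : (R⁻¹)ᵀ = R⁻¹ := hR.inv.eq
  simp only [careRes, closedLoopRes, riccatiGain, transpose_sub, transpose_mul, hRinv,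
    transpose_transpose, Matrix.sub_mul, Matrix.mul_sub, Matrix.mul_assoc,
    mul_nonsing_inv_cancel_left _ _ hRdet, nonsing_inv_mul_cancel_left _ _ hRdet]
  abel

theorem careRes_sub_careRes (hR : R.IsSymm) {Y Z : Matrix ι ι ℝ} (hY : Y.IsSymm)
    (hZ : Z.IsSymm) :
    careRes A B Q L R Y - careRes A B Q L R Z
      = (A - B * riccatiGain B L R Y)ᵀ * (Y - Z) + (Y - Z) * (A - B * riccatiGain B L R Y)
        + (Y - Z) * (B * R⁻¹ * Bᵀ) * (Y - Z) := by
  have hRinv : (R⁻¹)ᵀ = R⁻¹ := hR.inv.eq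
  simp only [careRes, riccatiGain, transpose_sub, transpose_mul, transpose_add, hRinv,
    transpose_transpose, hY.eq, hZ.eq, Matrix.add_mul, Matrix.mul_add, Matrix.sub_mul,
    Matrix.mul_sub, Matrix.mul_assoc]
  abel

end Riccati

section SCARE

variable {n m r : ℕ} (A Q : Matrix (Fin n) (Fin n) ℝ) (B L : Matrix (Fin n) (Fin m) ℝ)
  (R : Matrix (Fin m) (Fin m) ℝ) (A0 : Fin r → Matrix (Fin n) (Fin n) ℝ)
  (B0 : Fin r → Matrix (Fin n) (Fin m) ℝ)

theorem posDef_Rc {R : Matrix (Fin m) (Fin m) ℝ} (hR : R.PosDef) {X : Matrix (Fin n) (Fin n) ℝ}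
    (hX : X.PosSemidef) : (Rc R B0 X).PosDef :=
  hR.add_posSemidef (posSemidef_sum _ fun i _ => hX.transpose_mul_mul_same (B0 i))

theorem closedLoopRes_sub_closedLoopRes (K : Matrix (Fin m) (Fin n) ℝ)
    {X Y : Matrix (Fin n) (Fin n) ℝ} (hD : (Y - X).IsSymm) (W : Matrix (Fin n) (Fin n) ℝ) :
    closedLoopRes A B (Qc Q A0 Y) (Lc L A0 B0 Y) (Rc R B0 Y) K W
      - closedLoopRes A B (Qc Q A0 X) (Lc L A0 B0 X) (Rc R B0 X) K W
      = ∑ i, (A0 i - B0 i * K)ᵀ * (Y - X) * (A0 i - B0 i * K) := by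
  obtain ⟨D, rfl⟩ : ∃ D, Y = X + D := ⟨Y - X, (add_sub_cancel X Y).symm⟩
  rw [add_sub_cancel_left] at hD ⊢
  simp only [closedLoopRes, Qc, Lc, Rc, Pi11, Pi12, Pi22, transpose_sub, transpose_add,
    transpose_mul, transpose_sum, transpose_transpose, hD.eq, Matrix.mul_add, Matrix.add_mul,
    Matrix.mul_sub, Matrix.sub_mul, Matrix.mul_sum, Matrix.sum_mul, Finset.sum_add_distrib,
    Finset.sum_sub_distrib, Matrix.mul_assoc]
  abel

theorem stackNegI_transpose_mul_Omega_mul_stackNegI {X Z : Matrix (Fin n) (Fin n) ℝ}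
    (hRX : (Rc R B0 X).IsSymm) (hZ : Z.IsSymm) :
    (stackNegI Z)ᵀ * Omega A B Q L R A0 B0 X * stackNegI Z
      = careRes A B (Qc Q A0 X) (Lc L A0 B0 X) (Rc R B0 X) Z := by
  have hRinv : ((Rc R B0 X)⁻¹)ᵀ = (Rc R B0 X)⁻¹ := hRX.inv.eq
  simp only [stackNegI, Omega, transpose_fromRows, fromCols_mul_fromBlocks, fromCols_mul_fromRows,
    careRes, Ac, Gc, Hc, transpose_neg, transpose_one, transpose_sub, transpose_add, transpose_mul,
    transpose_transpose, hZ.eq, hRinv, Matrix.add_mul, Matrix.mul_add, Matrix.sub_mul,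
    Matrix.mul_sub, Matrix.neg_mul, Matrix.mul_neg, Matrix.mul_one, Matrix.one_mul,
    Matrix.mul_assoc]
  abel

theorem Ac_sub_Gc_mul {X Y : Matrix (Fin n) (Fin n) ℝ} (hY : Y.IsSymm) :
    Ac A B L R A0 B0 X - Gc B R B0 X * Y
      = A - B * riccatiGain B (Lc L A0 B0 X) (Rc R B0 X) Y := by
  simp only [Ac, Gc, riccatiGain, transpose_add, transpose_mul, hY.eq, Matrix.mul_add,
    Matrix.mul_assoc]
  abel

theorem careRes_frozen_eq_scareRes_sub {X Y : Matrix (Fin n) (Fin n) ℝ}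
    (hRX : (Rc R B0 X).PosDef) (hRY : (Rc R B0 Y).PosDef) (hD : (Y - X).IsSymm) :
    let K := riccatiGain B (Lc L A0 B0 Y) (Rc R B0 Y) Y
    careRes A B (Qc Q A0 X) (Lc L A0 B0 X) (Rc R B0 X) Y
      = scareRes A B Q L R A0 B0 Y - ∑ i, (A0 i - B0 i * K)ᵀ * (Y - X) * (A0 i - B0 i * K)
        - (K - riccatiGain B (Lc L A0 B0 X) (Rc R B0 X) Y)ᵀ * Rc R B0 X
          * (K - riccatiGain B (Lc L A0 B0 X) (Rc R B0 X) Y) := by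
  intro K
  have hY := careRes_eq_closedLoopRes_sub A B (Qc Q A0 Y) (Lc L A0 B0 Y)
    (isHermitian_iff_isSymm.mp hRY.isHermitian) ((isUnit_iff_isUnit_det _).mp hRY.isUnit) K Y
  rw [sub_self, transpose_zero, Matrix.zero_mul, Matrix.zero_mul, sub_zero] at hY
  rw [careRes_eq_closedLoopRes_sub A B _ _ (isHermitian_iff_isSymm.mp hRX.isHermitian)
      ((isUnit_iff_isUnit_det _).mp hRX.isUnit) K Y, scareRes, ← careRes, hY,
    ← closedLoopRes_sub_closedLoopRes A Q B L R A0 B0 K hD Y]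
  abel

end SCARE

theorem stmt12_general (n m r : ℕ)
    (A Q : Matrix (Fin n) (Fin n) ℝ) (B L : Matrix (Fin n) (Fin m) ℝ)
    (R : Matrix (Fin m) (Fin m) ℝ)
    (A0 : Fin r → Matrix (Fin n) (Fin n) ℝ) (B0 : Fin r → Matrix (Fin n) (Fin m) ℝ)
    (hRpd : R.PosDef)
    (X Xs Z : Matrix (Fin n) (Fin n) ℝ)
    (hZ : Z.IsHermitian)
    (hXpsd : X.PosSemidef) (hle : (Xs - X).PosSemidef)
    (hsol : scareRes A B Q L R A0 B0 Xs = 0)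
    (hstable : IsStableMatrix (Ac A B L R A0 B0 X - Gc B R B0 X * Xs))
    (hfroz : (stackNegI Z)ᵀ * Omega A B Q L R A0 B0 X * stackNegI Z = 0) :
    (Xs - Z).PosSemidef := by
  have hXs : Xs.PosSemidef := by simpa using hXpsd.add hle
  have hRX := posDef_Rc B0 hRpd hXpsd
  have hRXsymm : (Rc R B0 X).IsSymm := isHermitian_iff_isSymm.mp hRX.isHermitian
  have hXsymm : Xs.IsSymm := isHermitian_iff_isSymm.mp hXs.isHermitian
  have hZsymm : Z.IsSymm := isHermitian_iff_isSymm.mp hZ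
  have hZres : careRes A B (Qc Q A0 X) (Lc L A0 B0 X) (Rc R B0 X) Z = 0 := by
    rwa [← stackNegI_transpose_mul_Omega_mul_stackNegI A Q B L R A0 B0 hRXsymm hZsymm]
  have hXsres := careRes_frozen_eq_scareRes_sub A Q B L R A0 B0 hRX (posDef_Rc B0 hRpd hXs)
    (isHermitian_iff_isSymm.mp hle.isHermitian)
  have hlyap := careRes_sub_careRes A B (Qc Q A0 X) (Lc L A0 B0 X) hRXsymm hXsymm hZsymm
  rw [hZres, sub_zero, hXsres, hsol, ← Ac_sub_Gc_mul A B L R A0 B0 hXsymm] at hlyap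
  set K := riccatiGain B (Lc L A0 B0 Xs) (Rc R B0 Xs) Xs
  set Kx := riccatiGain B (Lc L A0 B0 X) (Rc R B0 X) Xs
  have hW₁ : (∑ i, (A0 i - B0 i * K)ᵀ * (Xs - X) * (A0 i - B0 i * K)).PosSemidef :=
    posSemidef_sum _ fun i _ => hle.transpose_mul_mul_same _
  have hW₂ : ((K - Kx)ᵀ * Rc R B0 X * (K - Kx)).PosSemidef :=
    hRX.posSemidef.transpose_mul_mul_same _
  have hW₃ : ((Xs - Z) * (B * (Rc R B0 X)⁻¹ * Bᵀ) * (Xs - Z)).PosSemidef := by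
    have hG := hRX.inv.posSemidef.transpose_mul_mul_same Bᵀ
    rw [transpose_transpose] at hG
    simpa only [(hXsymm.sub hZsymm).eq] using hG.transpose_mul_mul_same (Xs - Z)
  refine hstable.posSemidef_of_lyapunov_s12 (hXs.isHermitian.sub hZ) ((hW₁.add hW₂).add hW₃) ?_
  linear_combination (norm := abel) -hlyap

/-- If R ≻ 0, 0 ⪯ X ⪯ X_* with 𝓡(X_*) = 0 and A_c(X) − G_c(X)X_* stable, then any
solution Z of the CARE frozen at X satisfies Z ⪯ X_*. -/
theorem stmt12 (n m r : ℕ) (hn : 0 < n) (hm : 0 < m) (hr : 0 < r)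
    (A Q : Matrix (Fin n) (Fin n) ℝ) (B L : Matrix (Fin n) (Fin m) ℝ)
    (R : Matrix (Fin m) (Fin m) ℝ)
    (A0 : Fin r → Matrix (Fin n) (Fin n) ℝ) (B0 : Fin r → Matrix (Fin n) (Fin m) ℝ)
    (hQ : Q.IsHermitian) (hRsymm : R.IsHermitian)
    (hRpd : R.PosDef)
    (X Xs Z : Matrix (Fin n) (Fin n) ℝ)
    (hX : X.IsHermitian) (hXs : Xs.IsHermitian) (hZ : Z.IsHermitian)
    (hXpsd : X.PosSemidef) (hle : (Xs - X).PosSemidef)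
    (hsol : scareRes A B Q L R A0 B0 Xs = 0)
    (hstable : IsStableMatrix (Ac A B L R A0 B0 X - Gc B R B0 X * Xs))
    (hfroz : (stackNegI Z)ᵀ * Omega A B Q L R A0 B0 X * stackNegI Z = 0) :
    (Xs - Z).PosSemidef :=
  stmt12_general n m r A Q B L R A0 B0 hRpd X Xs Z hZ hXpsd hle hsol hstable hfroz
end
end

section
/- Assume R ≻ 0. Let X ∈ ℝ^{n×n} be symmetric with X ⪰ 0, set S = X B + L_c(X) and let P = [Iₙ; −R_c(X)⁻¹ Sᵀ] be the (n+m)×n matrix stacking Iₙ over −R_c(X)⁻¹ Sᵀ. Then Pᵀ ([Q, L; Lᵀ, R] + Π(X)) P = H_c(X) + X B R_c(X)⁻¹ Bᵀ X; equivalently, Pᵀ [Q_c(X), L_c(X); L_c(X)ᵀ, R_c(X)] P = H_c(X) + X G_c(X) X. -/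
open Matrix Filter

noncomputable section

/-- Block identity: with S = XB + L_c(X) and P = [Iₙ; −R_c(X)⁻¹Sᵀ],
Pᵀ([Q, L; Lᵀ, R] + Π(X))P = H_c(X) + XBR_c(X)⁻¹BᵀX, and equivalently
Pᵀ[Q_c(X), L_c(X); L_c(X)ᵀ, R_c(X)]P = H_c(X) + XG_c(X)X. -/
theorem stmt19 (n m r : ℕ) (hn : 0 < n) (hm : 0 < m) (hr : 0 < r)
    (A Q : Matrix (Fin n) (Fin n) ℝ) (B L : Matrix (Fin n) (Fin m) ℝ)
    (R : Matrix (Fin m) (Fin m) ℝ)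
    (A0 : Fin r → Matrix (Fin n) (Fin n) ℝ) (B0 : Fin r → Matrix (Fin n) (Fin m) ℝ)
    (hQ : Q.IsHermitian) (hRsymm : R.IsHermitian)
    (hRpd : R.PosDef)
    (X : Matrix (Fin n) (Fin n) ℝ) (hX : X.IsHermitian) (hXpsd : X.PosSemidef) :
    (fromRows (1 : Matrix (Fin n) (Fin n) ℝ)
        (-((Rc R B0 X)⁻¹ * (X * B + Lc L A0 B0 X)ᵀ)))ᵀ *
      (fromBlocks Q L Lᵀ R + PiBlock A0 B0 X) *
      fromRows (1 : Matrix (Fin n) (Fin n) ℝ)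
        (-((Rc R B0 X)⁻¹ * (X * B + Lc L A0 B0 X)ᵀ)) =
      Hc Q L R A0 B0 X + X * B * (Rc R B0 X)⁻¹ * Bᵀ * X ∧
    (fromRows (1 : Matrix (Fin n) (Fin n) ℝ)
        (-((Rc R B0 X)⁻¹ * (X * B + Lc L A0 B0 X)ᵀ)))ᵀ *
      fromBlocks (Qc Q A0 X) (Lc L A0 B0 X) (Lc L A0 B0 X)ᵀ (Rc R B0 X) *
      fromRows (1 : Matrix (Fin n) (Fin n) ℝ)
        (-((Rc R B0 X)⁻¹ * (X * B + Lc L A0 B0 X)ᵀ)) =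
      Hc Q L R A0 B0 X + X * Gc B R B0 X * X := by
  classical
  have hXt : Xᵀ = X := hX
  have hPi22 : (Pi22 B0 X).PosSemidef := by
    unfold Pi22
    refine Finset.sum_induction _ _ (fun a b ha hb => ha.add hb) Matrix.PosSemidef.zero ?_
    intro i _
    simpa using hXpsd.conjTranspose_mul_mul_same (B0 i)
  have hRcpd : (Rc R B0 X).PosDef := hRpd.add_posSemidef hPi22
  have hRct : (Rc R B0 X)ᵀ = Rc R B0 X := hRcpd.isHermitian
  have hRcu : IsUnit (Rc R B0 X).det := Matrix.isUnit_iff_isUnit_det _ |>.1 hRcpd.isUnit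
  have hRcit : ((Rc R B0 X)⁻¹)ᵀ = (Rc R B0 X)⁻¹ := by
    rw [Matrix.transpose_nonsing_inv, hRct]
  set Ri := (Rc R B0 X)⁻¹ with hRi
  have hRiRRi : Ri * Rc R B0 X * Ri = Ri := by
    rw [hRi, Matrix.nonsing_inv_mul _ hRcu, Matrix.one_mul]
  have hblocks : fromBlocks Q L Lᵀ R + PiBlock A0 B0 X =
      fromBlocks (Qc Q A0 X) (Lc L A0 B0 X) (Lc L A0 B0 X)ᵀ (Rc R B0 X) := by
    rw [PiBlock, Matrix.fromBlocks_add]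
    simp only [Qc, Lc, Rc, Matrix.transpose_add]
  have key : (fromRows (1 : Matrix (Fin n) (Fin n) ℝ)
        (-(Ri * (X * B + Lc L A0 B0 X)ᵀ)))ᵀ *
      fromBlocks (Qc Q A0 X) (Lc L A0 B0 X) (Lc L A0 B0 X)ᵀ (Rc R B0 X) *
      fromRows (1 : Matrix (Fin n) (Fin n) ℝ)
        (-(Ri * (X * B + Lc L A0 B0 X)ᵀ)) =
      Hc Q L R A0 B0 X + X * B * Ri * Bᵀ * X := by
    set S := X * B + Lc L A0 B0 X with hS
    have hSt : Sᵀ = Bᵀ * X + (Lc L A0 B0 X)ᵀ := by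
      rw [hS, Matrix.transpose_add, Matrix.transpose_mul, hXt]
    rw [Matrix.transpose_fromRows, Matrix.mul_assoc,
      Matrix.fromBlocks_mul_fromRows, Matrix.fromCols_mul_fromRows]
    have hKt : (-(Ri * Sᵀ))ᵀ = -(S * Ri) := by
      rw [Matrix.transpose_neg, Matrix.transpose_mul, hRcit, Matrix.transpose_transpose]
    rw [hKt]
    have hRRS : Ri * (Rc R B0 X * (Ri * Sᵀ)) = Ri * Sᵀ := by
      rw [← Matrix.mul_assoc, ← Matrix.mul_assoc, hRiRRi]
    simp only [Matrix.transpose_one, Matrix.one_mul, Matrix.mul_one, Matrix.mul_neg, Matrix.neg_mul,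
      Matrix.mul_add, neg_neg, Matrix.mul_assoc]
    rw [hRRS, hS, hSt, Hc]
    simp only [Matrix.mul_add, Matrix.add_mul, Matrix.mul_assoc]
    abel
  refine ⟨by rw [hblocks]; exact key, ?_⟩
  have hG : X * Gc B R B0 X * X = X * B * Ri * Bᵀ * X := by
    simp only [Gc, ← hRi, Matrix.mul_assoc]
  rw [hG]
  exact key
end
end
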